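/- (ICP coverage.) Let (X_1,Y_1),...,(X_{n+1},Y_{n+1}) be exchangeable, A : X × Y → R a measurable nonconformity measure, A_i = A(X_i, Y_i), and Q^{(n)}_{1-δ} the empirical (1-δ)-quantile of {A_1,...,A_n} ∪ {+∞} (equivalently the ⌈(1-δ)(n+1)⌉-th smallest of these n+1 extended reals). Then P(A(X_{n+1}, Y_{n+1}) ≤ Q^{(n)}_{1-δ}) ≥ 1 - δ, and consequently the prediction set C(X_{n+1}) = {y : A(X_{n+1}, y) ≤ Q^{(n)}_{1-δ}} satisfies P(Y_{n+1} ∈ C(X_{n+1})) ≥ 1 - δ. -/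

import Mathlib

open MeasureTheory

/-- The `k`-th smallest element (1-indexed) of the multiset of values of `a`;
returns `d` if `k` is out of range. -/
def orderStat {α : Type*} [LinearOrder α] (d : α) {m : ℕ} (a : Fin m → α) (k : ℕ) : α :=
  (Multiset.sort (↑(List.ofFn a)) (· ≤ ·)).getD (k - 1) d

/-- A finite family of random elements is exchangeable if the joint law is invariant
under every permutation of the indices. -/
def Exchangeable {Ω α : Type*} [MeasurableSpace Ω] [MeasurableSpace α]
    (P : Measure Ω) {m : ℕ} (X : Fin m → Ω → α) : Prop :=
  ∀ π : Equiv.Perm (Fin m),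
    Measure.map (fun ω => fun i => X (π i) ω) P = Measure.map (fun ω => fun i => X i ω) P

/-! Among any `m` values at least `k ≤ m` have fewer than `k` entries strictly below them, so
the events "index `j` has rank below `k`" cover every outcome at least `k` times. Exchangeability
gives these `m` events equal probability, hence each has probability at least `k / m`. With
`k = ⌈(1 - δ)(n + 1)⌉` and the score list completed by `+∞`, the event `A_{n+1} ≤ Q` is exactly
the event that the test score has rank below `k` among all `n + 1` scores. -/

section

open Finset
open scoped ENNReal

theorem Equiv.Perm.card_filter_comp {m : ℕ} (π : Equiv.Perm (Fin m)) (p : Fin m → Prop)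
    [DecidablePred p] : #{i | p (π i)} = #{i | p i} :=
  card_equiv π (by simp)

section OrderStatistics

variable {α : Type*} [LinearOrder α] {m : ℕ}

theorem orderStat_eq_apply_sort (d : α) (a : Fin m → α) {k : ℕ} (hk : k - 1 < m) :
    orderStat d a k = a (Tuple.sort a ⟨k - 1, hk⟩) := by
  have hsort : Multiset.sort (List.ofFn a : Multiset α) (· ≤ ·) = List.ofFn (a ∘ Tuple.sort a) :=
    List.Perm.eq_of_sortedLE (Multiset.pairwise_sort (List.ofFn a : Multiset α) _).sortedLE
      (Tuple.monotone_sort a).sortedLE_ofFn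
      ((Multiset.coe_eq_coe.mp (Multiset.sort_eq _ _)).trans ((Tuple.sort a).ofFn_comp_perm a).symm)
  simp [orderStat, hsort, hk]

theorem le_orderStat_iff (d : α) (a : Fin m → α) {k : ℕ} (hk₀ : 1 ≤ k) (hkm : k ≤ m) (x : α) :
    x ≤ orderStat d a k ↔ #{i | a i < x} < k := by
  have h := Tuple.lt_card_lt_iff_apply_lt_of_monotone (a := x) (j := ⟨k - 1, by omega⟩)
    (Tuple.monotone_sort a)
  simp only [Function.comp_apply, (Tuple.sort a).card_filter_comp (a · < x)] at h
  rw [orderStat_eq_apply_sort d a (by omega), ← not_lt, ← h]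
  omega

def Tuple.rank (v : Fin m → α) (j : Fin m) : ℕ := #{i | v i < v j}

theorem Tuple.rank_comp_perm (v : Fin m → α) (π : Equiv.Perm (Fin m)) (j : Fin m) :
    rank (v ∘ π) j = rank v (π j) :=
  π.card_filter_comp (v · < v (π j))

theorem Tuple.rank_comp_strictMono {β : Type*} [LinearOrder β] {f : α → β} (hf : StrictMono f)
    (v : Fin m → α) (j : Fin m) : rank (f ∘ v) j = rank v j := by
  simp only [rank, Function.comp_apply, hf.lt_iff_lt]

theorem Tuple.le_card_rank_lt (v : Fin m → α) {k : ℕ} (hkm : k ≤ m) :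
    k ≤ #{j | rank v j < k} := by
  have hrank (j : Fin m) : rank v (sort v j) ≤ j := by
    rw [← rank_comp_perm, rank, ← not_lt, lt_card_lt_iff_apply_lt_of_monotone (monotone_sort v)]
    exact lt_irrefl _
  calc k = #{j : Fin m | (j : ℕ) < k} := by rw [Fin.card_filter_val_lt]; omega
    _ ≤ #{j | rank v (sort v j) < k} :=
      card_le_card (monotone_filter_right _ fun j _ hj => (hrank j).trans_lt hj)
    _ = #{j | rank v j < k} := (sort v).card_filter_comp (rank v · < k)

theorem last_le_orderStat_snoc_top_iff [OrderTop α] {n k : ℕ} (v : Fin (n + 1) → α)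
    (hk₀ : 1 ≤ k) (hkn : k ≤ n + 1) :
    v (Fin.last n) ≤ orderStat ⊤ (Fin.snoc (fun i : Fin n => v i.castSucc) ⊤) k
      ↔ Tuple.rank v (Fin.last n) < k := by
  rw [le_orderStat_iff _ _ hk₀ hkn, Tuple.rank]
  congr! 2
  refine filter_congr fun i _ => Fin.lastCases ?_ (fun i => ?_) i <;> simp

end OrderStatistics

theorem MeasureTheory.natCast_mul_measure_univ_le_sum_measure {Ω ι : Type*} [MeasurableSpace Ω]
    {μ : Measure Ω} [Fintype ι] {E : ι → Set Ω} [∀ ω, DecidablePred (ω ∈ E ·)]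
    (hE : ∀ i, MeasurableSet (E i)) {k : ℕ} (hk : ∀ ω, k ≤ #{i | ω ∈ E i}) :
    k * μ Set.univ ≤ ∑ i, μ (E i) :=
  calc k * μ Set.univ = ∫⁻ _, (k : ℝ≥0∞) ∂μ := by rw [lintegral_const, mul_comm]
    _ ≤ ∫⁻ ω, ∑ i, (E i).indicator 1 ω ∂μ := lintegral_mono fun ω => by
      simp only [Set.indicator_apply, Pi.one_apply, sum_boole]
      exact_mod_cast hk ω
    _ = ∑ i, μ (E i) := by
      rw [lintegral_finsetSum _ fun i _ => measurable_one.indicator (hE i)]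
      simp only [lintegral_indicator_one (hE _)]

section Exchangeable

variable {Ω β : Type*} [MeasurableSpace Ω] [MeasurableSpace β] {P : Measure Ω} {m : ℕ}
  {Z : Fin m → Ω → β}

theorem Exchangeable.comp (h : Exchangeable P Z) (hZ : ∀ i, Measurable (Z i)) {γ : Type*}
    [MeasurableSpace γ] {g : β → γ} (hg : Measurable g) :
    Exchangeable P (fun i ω => g (Z i ω)) := fun π => by
  have hgπ : Measurable fun (z : Fin m → β) i => g (z i) := by fun_prop
  have hZπ : Measurable fun ω i => Z (π i) ω := measurable_pi_lambda _ fun i => hZ (π i)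
  change Measure.map ((fun z i => g (z i)) ∘ fun ω i => Z (π i) ω) P
    = Measure.map ((fun z i => g (z i)) ∘ fun ω i => Z i ω) P
  rw [← Measure.map_map hgπ hZπ, h π, Measure.map_map hgπ (measurable_pi_lambda _ hZ)]

theorem Exchangeable.measure_preimage_comp_perm (h : Exchangeable P Z)
    (hZ : ∀ i, Measurable (Z i)) (π : Equiv.Perm (Fin m)) {E : Set (Fin m → β)}
    (hE : MeasurableSet E) :
    P ((fun ω i => Z (π i) ω) ⁻¹' E) = P ((fun ω i => Z i ω) ⁻¹' E) := by
  rw [← Measure.map_apply (measurable_pi_lambda _ fun i => hZ (π i)) hE, h π,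
    Measure.map_apply (measurable_pi_lambda _ hZ) hE]

end Exchangeable

section ExchangeableScores

variable {α : Type*} [TopologicalSpace α] [MeasurableSpace α] [OpensMeasurableSpace α]
  [LinearOrder α] [OrderClosedTopology α] [SecondCountableTopology α] {m : ℕ}

theorem Tuple.measurableSet_rank_lt (j : Fin m) (k : ℕ) :
    MeasurableSet {v : Fin m → α | rank v j < k} := by
  have hrank : Measurable fun v : Fin m → α => rank v j := by
    simp only [rank, card_filter]
    exact Finset.measurable_sum _ fun i _ => Measurable.ite
      (measurableSet_lt (measurable_pi_apply i) (measurable_pi_apply j))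
      measurable_const measurable_const
  exact hrank (measurableSet_Iio (a := k))

variable {Ω : Type*} [MeasurableSpace Ω] {P : Measure Ω} {S : Fin m → Ω → α}

theorem Exchangeable.measure_rank_lt_eq (h : Exchangeable P S) (hS : ∀ i, Measurable (S i))
    (j j' : Fin m) (k : ℕ) :
    P {ω | Tuple.rank (S · ω) j < k} = P {ω | Tuple.rank (S · ω) j' < k} := by
  have hswap : {ω | Tuple.rank (S · ω) j < k}
      = (fun ω i => S (Equiv.swap j' j i) ω) ⁻¹' {v | Tuple.rank v j' < k} := by
    ext ω
    change _ ↔ Tuple.rank ((S · ω) ∘ Equiv.swap j' j) j' < k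
    rw [Tuple.rank_comp_perm, Equiv.swap_apply_left]
    rfl
  rw [hswap, h.measure_preimage_comp_perm hS _ (Tuple.measurableSet_rank_lt j' k)]
  rfl

theorem Exchangeable.natCast_le_mul_measure_rank_lt [IsProbabilityMeasure P]
    (h : Exchangeable P S) (hS : ∀ i, Measurable (S i)) {k : ℕ} (hkm : k ≤ m) (j : Fin m) :
    (k : ℝ≥0∞) ≤ m * P {ω | Tuple.rank (S · ω) j < k} := by
  have hmeas (j' : Fin m) : MeasurableSet {ω | Tuple.rank (S · ω) j' < k} :=
    Tuple.measurableSet_rank_lt j' k |>.preimage (measurable_pi_lambda _ hS)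
  have hsum := natCast_mul_measure_univ_le_sum_measure (μ := P) hmeas
    fun ω => Tuple.le_card_rank_lt (S · ω) hkm
  rw [sum_congr rfl fun j' _ => h.measure_rank_lt_eq hS j' j k] at hsum
  simpa using hsum

end ExchangeableScores

theorem ENNReal.ofReal_le_of_mul_le_of_le_mul {r : ℝ} {m k : ℕ} {p : ℝ≥0∞} (hm : 0 < m)
    (hr : r * m ≤ k) (hk : (k : ℝ≥0∞) ≤ m * p) : ENNReal.ofReal r ≤ p := by
  have hrk : ENNReal.ofReal r * m ≤ k := by
    rw [← ENNReal.ofReal_natCast m, ← ENNReal.ofReal_mul' m.cast_nonneg, ← ENNReal.ofReal_natCast]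
    exact ENNReal.ofReal_le_ofReal hr
  exact (ENNReal.mul_le_mul_iff_left (by simp [hm.ne']) (by simp)).mp
    ((hrk.trans hk).trans_eq (mul_comm _ _))

end

/-- inductive conformal prediction coverage. -/
theorem stmt9 {Ω 𝒳 𝒴 : Type*} [MeasurableSpace Ω] [MeasurableSpace 𝒳] [MeasurableSpace 𝒴]
    (P : Measure Ω) [IsProbabilityMeasure P] (n : ℕ)
    (X : Fin (n + 1) → Ω → 𝒳) (Y : Fin (n + 1) → Ω → 𝒴)
    (hmeasX : ∀ i, Measurable (X i)) (hmeasY : ∀ i, Measurable (Y i))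
    (hexch : Exchangeable P (fun i ω => (X i ω, Y i ω)))
    (A : 𝒳 → 𝒴 → ℝ) (hA : Measurable (fun p : 𝒳 × 𝒴 => A p.1 p.2))
    (δ : ℝ) (hδ : δ ∈ Set.Ioo (0 : ℝ) 1)
    (Q : Ω → EReal)
    (hQ : ∀ ω, Q ω = orderStat (⊤ : EReal)
      (Fin.snoc (fun i : Fin n => ((A (X i.castSucc ω) (Y i.castSucc ω) : ℝ) : EReal)) ⊤)
      ⌈(1 - δ) * (n + 1 : ℝ)⌉₊) :
    ENNReal.ofReal (1 - δ) ≤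
        P {ω | ((A (X (Fin.last n) ω) (Y (Fin.last n) ω) : ℝ) : EReal) ≤ Q ω} ∧
      ENNReal.ofReal (1 - δ) ≤
        P {ω | Y (Fin.last n) ω ∈ {y | ((A (X (Fin.last n) ω) y : ℝ) : EReal) ≤ Q ω}} := by
  obtain ⟨hδ₀, hδ₁⟩ := hδ
  set k := ⌈(1 - δ) * (n + 1 : ℝ)⌉₊
  have hk₀ : 1 ≤ k := Nat.ceil_pos.mpr (by nlinarith)
  have hkn : k ≤ n + 1 := Nat.ceil_le.mpr (by push_cast; nlinarith)
  set S : Fin (n + 1) → Ω → ℝ := fun i ω => A (X i ω) (Y i ω)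
  have hS (i : Fin (n + 1)) : Measurable (S i) := hA.comp ((hmeasX i).prodMk (hmeasY i))
  have hexchS : Exchangeable P S := hexch.comp (fun i => (hmeasX i).prodMk (hmeasY i)) hA
  have hevent : {ω | ((S (Fin.last n) ω : ℝ) : EReal) ≤ Q ω}
      = {ω | Tuple.rank (S · ω) (Fin.last n) < k} := by
    ext ω
    simp only [Set.mem_ofPred_eq]
    rw [hQ ω, ← Tuple.rank_comp_strictMono EReal.coe_strictMono]
    exact last_le_orderStat_snoc_top_iff (fun i => (S i ω : EReal)) hk₀ hkn
  have hcover : ENNReal.ofReal (1 - δ) ≤ P {ω | ((S (Fin.last n) ω : ℝ) : EReal) ≤ Q ω} := by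
    refine ENNReal.ofReal_le_of_mul_le_of_le_mul n.add_one_pos (k := k) ?_ ?_
    · push_cast
      exact Nat.le_ceil _
    · rw [hevent]
      exact hexchS.natCast_le_mul_measure_rank_lt hS hkn (Fin.last n)
  exact ⟨hcover, hcover⟩
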